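/- arXiv:2604.25411 — 4 statements merged into one kernel-verified Lean document; each statement's English description precedes it below -/
import Mathlib

section
/- Let H be a finite-dimensional Hilbert space and A a linear operator on H such that ‖e^{tA}‖ ≤ C e^{ω₀ t} for all t ≥ 0 with ω₀ < 0 and C > 0. Then the Lyapunov operator 𝒜 : L(H) → L(H) defined by 𝒜(P) = A* P + P A is invertible, and its inverse is given by 𝒜^{-1}(M) = −∫₀^∞ e^{sA*} M e^{sA} ds, with ‖𝒜^{-1}(M)‖ ≤ (C²/(2|ω₀|)) ‖M‖ for all M ∈ L(H). -/
/-!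
For `F(s) = e^{sb} M e^{sa}` one has `F' = e^{sb} (bM + Ma) e^{sa} = bF + Fa`, and exponential
decay of both semigroups makes `F` integrable on `(0, ∞)` with `F(s) → 0`. The fundamental
theorem of calculus then shows that `M ↦ -∫₀^∞ e^{sb} M e^{sa} ds` is a two-sided inverse of the
Sylvester operator `X ↦ bX + Xa`, and integrating `‖F(s)‖ ≤ C_b C_a ‖M‖ e^{(ω_b + ω_a)s}` bounds
it. The Lyapunov operator is the case `b = A*`, since `e^{sA*} = (e^{sA})*`.
-/

open ContinuousLinearMap MeasureTheory Filter Set Topology NormedSpace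

section Sylvester

variable {𝔸 : Type*} [NormedRing 𝔸] [NormedAlgebra ℝ 𝔸]

def ExpDecay (a : 𝔸) (C ω : ℝ) : Prop :=
  ∀ t : ℝ, 0 ≤ t → ‖exp (t • a)‖ ≤ C * Real.exp (ω * t)

noncomputable def sylvester (b a : 𝔸) : 𝔸 →L[ℝ] 𝔸 :=
  mul ℝ 𝔸 b + (mul ℝ 𝔸).flip a

@[simp]
lemma sylvester_apply (b a P : 𝔸) : sylvester b a P = b * P + P * a := rfl

lemma sylvester_conj_exp (b a M : 𝔸) (s : ℝ) :
    sylvester b a (exp (s • b) * M * exp (s • a)) =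
      exp (s • b) * sylvester b a M * exp (s • a) := by
  have hb : Commute b (exp (s • b)) := ((Commute.refl b).smul_right s).exp_right
  have ha : Commute a (exp (s • a)) := ((Commute.refl a).smul_right s).exp_right
  simp only [sylvester_apply, mul_add, add_mul, ← mul_assoc, hb.eq]
  rw [mul_assoc (exp (s • b) * M) a, ha.eq, ← mul_assoc]

lemma hasDerivAt_exp_mul_exp [CompleteSpace 𝔸] (b a M : 𝔸) (s : ℝ) :
    HasDerivAt (fun t : ℝ => exp (t • b) * M * exp (t • a))
      (exp (s • b) * sylvester b a M * exp (s • a)) s :=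
  (((hasDerivAt_exp_smul_const b s).mul_const M).mul (hasDerivAt_exp_smul_const' a s)).congr_deriv
    (by simp only [sylvester_apply, mul_add, add_mul, mul_assoc])

section Decay

variable {b a : 𝔸} {Cb Ca ωb ωa : ℝ}

lemma ExpDecay.norm_exp_mul_exp_le (hb : ExpDecay b Cb ωb) (ha : ExpDecay a Ca ωa) (M : 𝔸)
    {s : ℝ} (hs : 0 ≤ s) :
    ‖exp (s • b) * M * exp (s • a)‖ ≤ Cb * Ca * ‖M‖ * Real.exp ((ωb + ωa) * s) := by
  have hb0 : 0 ≤ Cb * Real.exp (ωb * s) := (norm_nonneg _).trans (hb s hs)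
  calc ‖exp (s • b) * M * exp (s • a)‖ ≤ ‖exp (s • b)‖ * ‖M‖ * ‖exp (s • a)‖ :=
        norm_mul₃_le
    _ ≤ Cb * Real.exp (ωb * s) * ‖M‖ * (Ca * Real.exp (ωa * s)) := by
        gcongr
        exacts [hb s hs, ha s hs]
    _ = Cb * Ca * ‖M‖ * Real.exp ((ωb + ωa) * s) := by
        rw [add_mul, Real.exp_add]; ring

variable (hb : ExpDecay b Cb ωb) (ha : ExpDecay a Ca ωa) (hω : ωb + ωa < 0)
include hb ha hω

lemma ExpDecay.tendsto_exp_mul_exp (M : 𝔸) :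
    Tendsto (fun s : ℝ => exp (s • b) * M * exp (s • a)) atTop (𝓝 0) := by
  have hg : Tendsto (fun s => Cb * Ca * ‖M‖ * Real.exp ((ωb + ωa) * s)) atTop (𝓝 0) := by
    simpa using (Real.tendsto_exp_atBot.comp
      (tendsto_id.const_mul_atTop_of_neg hω)).const_mul (Cb * Ca * ‖M‖)
  refine squeeze_zero_norm' ?_ hg
  filter_upwards [eventually_ge_atTop 0] with s hs
  exact hb.norm_exp_mul_exp_le ha M hs

lemma ExpDecay.norm_integral_exp_mul_exp_le (M : 𝔸) :
    ‖∫ s in Ioi (0 : ℝ), exp (s • b) * M * exp (s • a)‖ ≤ Cb * Ca / -(ωb + ωa) * ‖M‖ := by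
  calc ‖∫ s in Ioi (0 : ℝ), exp (s • b) * M * exp (s • a)‖
      ≤ ∫ s in Ioi (0 : ℝ), Cb * Ca * ‖M‖ * Real.exp ((ωb + ωa) * s) := by
        refine norm_integral_le_of_norm_le ((integrableOn_exp_mul_Ioi hω 0).const_mul _) ?_
        filter_upwards [ae_restrict_mem measurableSet_Ioi] with s hs
        exact hb.norm_exp_mul_exp_le ha M hs.le
    _ = Cb * Ca / -(ωb + ωa) * ‖M‖ := by
        rw [integral_const_mul, integral_exp_mul_Ioi hω, mul_zero, Real.exp_zero, neg_div, div_neg]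
        ring

variable [CompleteSpace 𝔸]

lemma ExpDecay.integrableOn_exp_mul_exp (M : 𝔸) :
    IntegrableOn (fun s : ℝ => exp (s • b) * M * exp (s • a)) (Ioi 0) := by
  refine Integrable.mono' ((integrableOn_exp_mul_Ioi hω 0).const_mul (Cb * Ca * ‖M‖)) ?_ ?_
  · exact (continuous_iff_continuousAt.2 fun s =>
      (hasDerivAt_exp_mul_exp b a M s).continuousAt).aestronglyMeasurable
  · filter_upwards [ae_restrict_mem measurableSet_Ioi] with s hs
    exact hb.norm_exp_mul_exp_le ha M hs.le

lemma ExpDecay.integral_exp_mul_sylvester_mul_exp (P : 𝔸) :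
    ∫ s in Ioi (0 : ℝ), exp (s • b) * sylvester b a P * exp (s • a) = -P := by
  rw [integral_Ioi_of_hasDerivAt_of_tendsto' (fun s _ => hasDerivAt_exp_mul_exp b a P s)
    (hb.integrableOn_exp_mul_exp ha hω _) (hb.tendsto_exp_mul_exp ha hω P)]
  simp

lemma ExpDecay.sylvester_integral_exp_mul_exp (M : 𝔸) :
    sylvester b a (∫ s in Ioi (0 : ℝ), exp (s • b) * M * exp (s • a)) = -M := by
  rw [← (sylvester b a).integral_comp_comm (hb.integrableOn_exp_mul_exp ha hω M)]
  simp_rw [sylvester_conj_exp]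
  exact hb.integral_exp_mul_sylvester_mul_exp ha hω M

theorem ExpDecay.sylvester_bijective : Function.Bijective (sylvester b a) := by
  refine Function.bijective_iff_has_inverse.2
    ⟨fun M => -∫ s in Ioi (0 : ℝ), exp (s • b) * M * exp (s • a), fun P => ?_, fun M => ?_⟩
  · simp only [hb.integral_exp_mul_sylvester_mul_exp ha hω, neg_neg]
  · simp only [map_neg, hb.sylvester_integral_exp_mul_exp ha hω, neg_neg]

end Decay

section Star

variable [StarRing 𝔸] [NormedStarGroup 𝔸] [StarModule ℝ 𝔸]

lemma star_exp_smul (t : ℝ) (a : 𝔸) : star (exp (t • a)) = exp (t • star a) := by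
  rw [star_exp, star_smul, star_trivial]

lemma ExpDecay.star {a : 𝔸} {C ω : ℝ} (h : ExpDecay a C ω) : ExpDecay (star a) C ω :=
  fun t ht => by rw [← star_exp_smul, norm_star]; exact h t ht

end Star

end Sylvester

theorem stmt_4_general {H : Type*} [NormedAddCommGroup H] [InnerProductSpace ℂ H]
    [FiniteDimensional ℂ H] (A : H →L[ℂ] H) (C ω₀ : ℝ) (hω : ω₀ < 0)
    (hexp : ∀ t : ℝ, 0 ≤ t → ‖NormedSpace.exp (t • A)‖ ≤ C * Real.exp (ω₀ * t)) :
    Function.Bijective (fun P : H →L[ℂ] H => adjoint A * P + P * A) ∧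
    ∀ M : H →L[ℂ] H,
      (fun P : H →L[ℂ] H => adjoint A * P + P * A)
          (-(∫ s in Set.Ioi (0 : ℝ),
              adjoint (NormedSpace.exp (s • A)) * M * NormedSpace.exp (s • A))) = M ∧
      ‖-(∫ s in Set.Ioi (0 : ℝ),
          adjoint (NormedSpace.exp (s • A)) * M * NormedSpace.exp (s • A))‖ ≤
        C ^ 2 / (2 * |ω₀|) * ‖M‖ := by
  have hA : ExpDecay A C ω₀ := hexp
  have hAdj : ExpDecay (adjoint A) C ω₀ := hA.star
  have hω' : ω₀ + ω₀ < 0 := by linarith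
  have hconj (s : ℝ) : adjoint (NormedSpace.exp (s • A)) = NormedSpace.exp (s • adjoint A) :=
    star_exp_smul s A
  simp_rw [hconj]
  refine ⟨hAdj.sylvester_bijective hA hω', fun M => ⟨?_, ?_⟩⟩
  · show sylvester (adjoint A) A (-_) = M
    rw [map_neg, hAdj.sylvester_integral_exp_mul_exp hA hω' M, neg_neg]
  · rw [norm_neg]
    convert hAdj.norm_integral_exp_mul_exp_le hA hω' M using 2
    rw [abs_of_neg hω]
    ring

/-- The Lyapunov operator `𝒜(P) = A*P + PA` associated with an exponentially stable `A`
is invertible, with inverse `M ↦ -∫₀^∞ e^{sA*} M e^{sA} ds`, and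
`‖𝒜⁻¹(M)‖ ≤ (C²/(2|ω₀|)) ‖M‖`. -/
theorem stmt_4 {H : Type*} [NormedAddCommGroup H] [InnerProductSpace ℂ H]
    [FiniteDimensional ℂ H] (A : H →L[ℂ] H) (C ω₀ : ℝ) (hC : 0 < C) (hω : ω₀ < 0)
    (hexp : ∀ t : ℝ, 0 ≤ t → ‖NormedSpace.exp (t • A)‖ ≤ C * Real.exp (ω₀ * t)) :
    Function.Bijective (fun P : H →L[ℂ] H => adjoint A * P + P * A) ∧
    ∀ M : H →L[ℂ] H,
      (fun P : H →L[ℂ] H => adjoint A * P + P * A)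
          (-(∫ s in Set.Ioi (0 : ℝ),
              adjoint (NormedSpace.exp (s • A)) * M * NormedSpace.exp (s • A))) = M ∧
      ‖-(∫ s in Set.Ioi (0 : ℝ),
          adjoint (NormedSpace.exp (s • A)) * M * NormedSpace.exp (s • A))‖ ≤
        C ^ 2 / (2 * |ω₀|) * ‖M‖ :=
  stmt_4_general A C ω₀ hω hexp
end

section
/- Let H be a Hilbert space, λ > 0, S a bounded non-negative self-adjoint operator on H, and define the time-varying coefficient S̄(t) = e^{2λt} S. Then for every non-negative self-adjoint P₀ ∈ L(H), the solution of P̄'(t) = −P̄(t) S̄(t) P̄(t), P̄(0) = P₀, is given by P̄(t) = ( I + ((e^{2λt} − 1)/(2λ)) P₀ S )^{-1} P₀, whenever the indicated inverse exists. -/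
open ContinuousLinearMap
open scoped InnerProductSpace

/-! With `A(t) = 1 + g(t) • P₀ S` one has `(A⁻¹)' = -A⁻¹ A' A⁻¹` and `A' = g'(t) • P₀ S`, so
`(A⁻¹ P₀)' = -(A⁻¹ P₀) (g'(t) • S) (A⁻¹ P₀)`; for `g(t) = (e^{2λt} - 1)/(2λ)` this is the
Riccati equation with `S̄(t) = g'(t) • S`, and `g(0) = 0` gives the initial condition. -/

theorem HasDerivAt.ringInverse {𝕜 R : Type*} [NontriviallyNormedField 𝕜] [NormedRing R]
    [HasSummableGeomSeries R] [NormedAlgebra 𝕜 R] {A : 𝕜 → R} {A' : R} {t : 𝕜}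
    (hA : HasDerivAt A A' t) (hu : IsUnit (A t)) :
    HasDerivAt (fun s => Ring.inverse (A s))
      (-(Ring.inverse (A t) * A' * Ring.inverse (A t))) t := by
  obtain ⟨u, hu⟩ := hu
  rw [← hu, Ring.inverse_unit]
  exact (hu ▸ hasFDerivAt_ringInverse (𝕜 := 𝕜) u).comp_hasDerivAt t hA

theorem hasDerivAt_ringInverse_one_add_smul_mul_mul {𝕜 R : Type*} [NontriviallyNormedField 𝕜]
    [NormedRing R] [HasSummableGeomSeries R] [NormedAlgebra 𝕜 R] {g : 𝕜 → 𝕜} {g' t : 𝕜}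
    (P S : R) (hg : HasDerivAt g g' t) (hu : IsUnit (1 + g t • (P * S))) :
    HasDerivAt (fun s => Ring.inverse (1 + g s • (P * S)) * P)
      (-((Ring.inverse (1 + g t • (P * S)) * P) * (g' • S) *
        (Ring.inverse (1 + g t • (P * S)) * P))) t := by
  have hA : HasDerivAt (fun s => 1 + g s • (P * S)) (g' • (P * S)) t :=
    (hg.smul_const (P * S)).const_add 1
  convert (hA.ringInverse hu).mul_const P using 1
  simp only [smul_mul_assoc, mul_smul_comm, neg_mul, mul_assoc]

theorem Real.hasDerivAt_exp_mul_sub_one_div {c : ℝ} (hc : c ≠ 0) (t : ℝ) :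
    HasDerivAt (fun t => (Real.exp (c * t) - 1) / c) (Real.exp (c * t)) t := by
  simpa [hc] using ((((hasDerivAt_id t).const_mul c).exp).sub_const 1).div_const c

theorem stmt_11_general {H : Type*} [NormedAddCommGroup H] [InnerProductSpace ℂ H] [CompleteSpace H]
    (S P₀ : H →L[ℂ] H)
    (l : ℝ) (hl : 0 < l) :
    (fun t : ℝ =>
        Ring.inverse (1 + ((Real.exp (2 * l * t) - 1) / (2 * l)) • (P₀ * S)) * P₀) 0 = P₀ ∧
    ∀ t : ℝ,
      IsUnit (1 + ((Real.exp (2 * l * t) - 1) / (2 * l)) • (P₀ * S)) →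
      HasDerivAt
        (fun t : ℝ =>
          Ring.inverse (1 + ((Real.exp (2 * l * t) - 1) / (2 * l)) • (P₀ * S)) * P₀)
        (-((Ring.inverse (1 + ((Real.exp (2 * l * t) - 1) / (2 * l)) • (P₀ * S)) * P₀) *
            (Real.exp (2 * l * t) • S) *
            (Ring.inverse (1 + ((Real.exp (2 * l * t) - 1) / (2 * l)) • (P₀ * S)) * P₀))) t := by
  refine ⟨by simp, fun t hu => ?_⟩
  exact hasDerivAt_ringInverse_one_add_smul_mul_mul P₀ S
    (Real.hasDerivAt_exp_mul_sub_one_div (by positivity) t) hu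

/-- The solution of `P̄' = -P̄ S̄(t) P̄`, `P̄(0) = P₀`, with `S̄(t) = e^{2λt} S`, is given by
`P̄(t) = (I + ((e^{2λt} - 1)/(2λ)) P₀ S)⁻¹ P₀`, whenever the indicated inverse exists. -/
theorem stmt_11 {H : Type*} [NormedAddCommGroup H] [InnerProductSpace ℂ H] [CompleteSpace H]
    (S P₀ : H →L[ℂ] H) (hSsa : IsSelfAdjoint S) (hP₀sa : IsSelfAdjoint P₀)
    (hSpos : ∀ x : H, 0 ≤ (⟪S x, x⟫_ℂ).re) (hP₀pos : ∀ x : H, 0 ≤ (⟪P₀ x, x⟫_ℂ).re)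
    (l : ℝ) (hl : 0 < l) :
    (fun t : ℝ =>
        Ring.inverse (1 + ((Real.exp (2 * l * t) - 1) / (2 * l)) • (P₀ * S)) * P₀) 0 = P₀ ∧
    ∀ t : ℝ,
      IsUnit (1 + ((Real.exp (2 * l * t) - 1) / (2 * l)) • (P₀ * S)) →
      HasDerivAt
        (fun t : ℝ =>
          Ring.inverse (1 + ((Real.exp (2 * l * t) - 1) / (2 * l)) • (P₀ * S)) * P₀)
        (-((Ring.inverse (1 + ((Real.exp (2 * l * t) - 1) / (2 * l)) • (P₀ * S)) * P₀) *
            (Real.exp (2 * l * t) • S) *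
            (Ring.inverse (1 + ((Real.exp (2 * l * t) - 1) / (2 * l)) • (P₀ * S)) * P₀))) t :=
  stmt_11_general S P₀ l hl
end

section
/- Let H be a Hilbert space and S, M₀ bounded non-negative self-adjoint operators on H with ‖M₀‖ ≤ ρ, and suppose I + t S M₀ is invertible with ‖(I + tSM₀)^{-1}M₀‖ ≤ (1+Tρ‖S‖)ρ for all t ∈ [0,T]. Then the j-th derivative of t ↦ M(t) = (I + t S M₀)^{-1} M₀ satisfies ‖M^{(j)}(t)‖ ≤ j! ‖S‖^j (1 + T ρ ‖S‖)^{j+1} ρ^{j+1} for all t ∈ [0,T] and all j ≥ 1. -/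
/-!
Write `R(t) = (1 + t A)⁻¹` with `A = S M₀`. Since `A` commutes with `R` and `R' = -R A R`, the
derivatives have the closed form `M^{(j)}(t) = (-1)^j j! R^{j+1} A^j M₀ = (-1)^j j! (S (M₀ R))^j (R M₀)`.
The factor `R M₀` is bounded by hypothesis. So is `M₀ R`: the push-through identity
`M₀ (1 + t S M₀)⁻¹ = (1 + t M₀ S)⁻¹ M₀` makes it self-adjoint, so its norm is its spectral radius,
and `x y`, `y x` have the same nonzero spectrum, hence `‖M₀ R‖ = r(R M₀) ≤ ‖R M₀‖`.
-/

open Ring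
open scoped InnerProductSpace

theorem SemiconjBy.ringInverse {M₀ : Type*} [MonoidWithZero M₀] {a x y : M₀}
    (h : SemiconjBy a x y) (hx : IsUnit x) (hy : IsUnit y) : SemiconjBy a x⁻¹ʳ y⁻¹ʳ := by
  obtain ⟨u, rfl⟩ := hx
  obtain ⟨v, rfl⟩ := hy
  simpa only [inverse_unit] using h.units_inv_right

theorem norm_pow_mul_le {R : Type*} [NormedRing R] (x y : R) (n : ℕ) :
    ‖x ^ n * y‖ ≤ ‖x‖ ^ n * ‖y‖ := by
  induction n with
  | zero => simp
  | succ n ih =>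
    calc ‖x ^ (n + 1) * y‖ = ‖x * (x ^ n * y)‖ := by rw [pow_succ', mul_assoc]
      _ ≤ ‖x‖ * (‖x‖ ^ n * ‖y‖) := (norm_mul_le _ _).trans (by gcongr)
      _ = ‖x‖ ^ (n + 1) * ‖y‖ := by ring

theorem spectralRadius_mul_comm {𝕜 A : Type*} [NormedField 𝕜] [Ring A] [Algebra 𝕜 A] (a b : A) :
    spectralRadius 𝕜 (a * b) = spectralRadius 𝕜 (b * a) := by
  suffices key : ∀ x y : A, spectralRadius 𝕜 (x * y) ≤ spectralRadius 𝕜 (y * x) from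
    le_antisymm (key a b) (key b a)
  intro x y
  refine iSup₂_le fun k hk => ?_
  rcases eq_or_ne k 0 with rfl | hk0
  · simp
  · have hk' : k ∈ spectrum 𝕜 (y * x) \ {0} := by
      rw [← spectrum.nonzero_mul_comm]
      exact ⟨hk, hk0⟩
    exact le_iSup₂ (f := fun k (_ : k ∈ spectrum 𝕜 (y * x)) => (‖k‖₊ : ENNReal)) k hk'.1

theorem IsSelfAdjoint.norm_le_norm_mul_comm {A : Type*} [CStarAlgebra A] {a b : A}
    (h : IsSelfAdjoint (a * b)) : ‖a * b‖ ≤ ‖b * a‖ := by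
  nontriviality A
  have : (‖a * b‖₊ : ENNReal) ≤ ‖b * a‖₊ := by
    rw [← h.spectralRadius_eq_nnnorm, spectralRadius_mul_comm]
    exact spectrum.spectralRadius_le_nnnorm (b * a)
  exact_mod_cast this

theorem IsSelfAdjoint.mul_ringInverse_one_add_smul_mul {R : Type*} [Ring R] [StarRing R]
    [Algebra ℝ R] [StarModule ℝ R] {p q : R} (hp : IsSelfAdjoint p) (hq : IsSelfAdjoint q)
    {t : ℝ} (ht : IsUnit (1 + t • (p * q))) : IsSelfAdjoint (q * (1 + t • (p * q))⁻¹ʳ) := by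
  have hstar : star (1 + t • (p * q)) = 1 + t • (q * p) := by
    simp [star_smul, hp.star_eq, hq.star_eq]
  have hpush : SemiconjBy q (1 + t • (p * q)) (1 + t • (q * p)) := by
    simp only [SemiconjBy, mul_add, add_mul, mul_smul_comm, smul_mul_assoc, mul_assoc, mul_one,
      one_mul]
  rw [IsSelfAdjoint, star_mul, hq.star_eq, ← inverse_star, hstar]
  exact (hpush.ringInverse ht (hstar ▸ ht.star)).eq.symm

theorem commute_ringInverse_one_add_smul {𝕜 R : Type*} [CommSemiring 𝕜] [Ring R] [Algebra 𝕜 R]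
    {a : R} {t : 𝕜} (ht : IsUnit (1 + t • a)) : Commute a (1 + t • a)⁻¹ʳ :=
  SemiconjBy.ringInverse ((Commute.one_right a).add_right ((Commute.refl a).smul_right t)) ht ht

section Resolvent

variable {𝕜 R : Type*} [NontriviallyNormedField 𝕜] [NormedRing R] [NormedAlgebra 𝕜 R]
  [HasSummableGeomSeries R] {a : R} {t : 𝕜}

theorem hasDerivAt_ringInverse_one_add_smul (ht : IsUnit (1 + t • a)) :
    HasDerivAt (fun s : 𝕜 => (1 + s • a)⁻¹ʳ) (-((1 + t • a)⁻¹ʳ ^ 2 * a)) t := by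
  have hc := commute_ringInverse_one_add_smul ht
  obtain ⟨u, hu⟩ := ht
  have hlin : HasDerivAt (fun s : 𝕜 => 1 + s • a) a t := by
    simpa using ((hasDerivAt_id t).smul_const a).const_add (1 : R)
  have hinv := (hu ▸ hasFDerivAt_ringInverse (𝕜 := 𝕜) u).comp_hasDerivAt t hlin
  rw [← hu, inverse_unit] at hc
  rw [← hu, inverse_unit, sq, mul_assoc, ← hc.eq, ← mul_assoc]
  simpa [Function.comp_def, hu] using hinv

theorem hasDerivAt_ringInverse_one_add_smul_pow (ht : IsUnit (1 + t • a)) (n : ℕ) :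
    HasDerivAt (fun s : 𝕜 => (1 + s • a)⁻¹ʳ ^ n)
      (-(n : 𝕜) • ((1 + t • a)⁻¹ʳ ^ (n + 1) * a)) t := by
  induction n with
  | zero => simpa using hasDerivAt_const t (1 : R)
  | succ n ih =>
    set r := (1 + t • a)⁻¹ʳ
    have e1 : r ^ (n + 1) * a * r = r ^ (n + 2) * a := by
      rw [mul_assoc, (commute_ringInverse_one_add_smul ht).eq, ← mul_assoc, ← pow_succ]
    have e2 : r ^ n * (r ^ 2 * a) = r ^ (n + 2) * a := by rw [← mul_assoc, ← pow_add]
    convert ih.mul (hasDerivAt_ringInverse_one_add_smul ht) using 1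
    · ext s; simp [pow_succ]
    · rw [smul_mul_assoc, e1, mul_neg, e2]
      push_cast
      module

theorem iteratedDerivWithin_ringInverse_one_add_smul_mul {s : Set 𝕜} (hs : UniqueDiffOn 𝕜 s)
    (hunit : ∀ t ∈ s, IsUnit (1 + t • a)) (b : R) (n : ℕ) :
    Set.EqOn (iteratedDerivWithin n (fun t => (1 + t • a)⁻¹ʳ * b) s)
      (fun t => ((-1) ^ n * n.factorial : 𝕜) • ((1 + t • a)⁻¹ʳ ^ (n + 1) * (a ^ n * b))) s := by
  induction n with
  | zero => intro t _; simp
  | succ n ih =>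
    intro t ht
    have hder : HasDerivAt (fun t =>
        ((-1) ^ n * n.factorial : 𝕜) • ((1 + t • a)⁻¹ʳ ^ (n + 1) * (a ^ n * b))) _ t :=
      ((hasDerivAt_ringInverse_one_add_smul_pow (hunit t ht) (n + 1)).mul_const
        (a ^ n * b)).const_smul ((-1) ^ n * n.factorial : 𝕜)
    rw [iteratedDerivWithin_succ, derivWithin_congr ih (ih ht),
      hder.hasDerivWithinAt.derivWithin (hs t ht), smul_mul_assoc, smul_smul, mul_assoc _ a,
      ← mul_assoc a, ← pow_succ']
    congr 1
    push_cast [Nat.factorial_succ, pow_succ]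
    ring

end Resolvent

theorem norm_pow_succ_mul_pow_mul_le {R : Type*} [NormedRing R] {s m r : R}
    (h : Commute (s * m) r) (j : ℕ) :
    ‖r ^ (j + 1) * ((s * m) ^ j * m)‖ ≤ (‖s‖ * ‖m * r‖) ^ j * ‖r * m‖ := by
  have hregroup : r ^ (j + 1) * ((s * m) ^ j * m) = (s * (m * r)) ^ j * (r * m) := by
    rw [← mul_assoc, ← (h.pow_pow j (j + 1)).eq, pow_succ, ← mul_assoc, ← h.mul_pow]
    simp only [mul_assoc]
  rw [hregroup]
  calc ‖(s * (m * r)) ^ j * (r * m)‖ ≤ ‖s * (m * r)‖ ^ j * ‖r * m‖ := norm_pow_mul_le _ _ _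
    _ ≤ (‖s‖ * ‖m * r‖) ^ j * ‖r * m‖ := by gcongr; exact norm_mul_le _ _

theorem stmt_17_general {H : Type*} [NormedAddCommGroup H] [InnerProductSpace ℂ H] [CompleteSpace H]
    (S M₀ : H →L[ℂ] H) (hSsa : IsSelfAdjoint S) (hM₀sa : IsSelfAdjoint M₀)
    (ρ T : ℝ) (hT : 0 < T)
    (hunit : ∀ t ∈ Set.Icc (0 : ℝ) T, IsUnit (1 + t • (S * M₀)))
    (hbound : ∀ t ∈ Set.Icc (0 : ℝ) T,
      ‖Ring.inverse (1 + t • (S * M₀)) * M₀‖ ≤ (1 + T * ρ * ‖S‖) * ρ) :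
    ∀ j : ℕ, 1 ≤ j → ∀ t ∈ Set.Icc (0 : ℝ) T,
      ‖iteratedDerivWithin j (fun t : ℝ => Ring.inverse (1 + t • (S * M₀)) * M₀)
          (Set.Icc (0 : ℝ) T) t‖ ≤
        (j.factorial : ℝ) * ‖S‖ ^ j * (1 + T * ρ * ‖S‖) ^ (j + 1) * ρ ^ (j + 1) := by
  intro j _ t ht
  set C := (1 + T * ρ * ‖S‖) * ρ
  have hRM₀ : ‖(1 + t • (S * M₀))⁻¹ʳ * M₀‖ ≤ C := hbound t ht
  have hM₀R : ‖M₀ * (1 + t • (S * M₀))⁻¹ʳ‖ ≤ C :=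
    ((hSsa.mul_ringInverse_one_add_smul_mul hM₀sa (hunit t ht)).norm_le_norm_mul_comm).trans hRM₀
  have hC : 0 ≤ C := (norm_nonneg _).trans hRM₀
  rw [iteratedDerivWithin_ringInverse_one_add_smul_mul (uniqueDiffOn_Icc hT) hunit M₀ j ht,
    norm_smul]
  calc ‖((-1) ^ j * j.factorial : ℝ)‖ * ‖(1 + t • (S * M₀))⁻¹ʳ ^ (j + 1) * ((S * M₀) ^ j * M₀)‖
      ≤ j.factorial * ((‖S‖ * C) ^ j * C) := by
        rw [norm_mul, norm_pow, norm_neg, norm_one, one_pow, one_mul, RCLike.norm_natCast]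
        gcongr
        exact (norm_pow_succ_mul_pow_mul_le (commute_ringInverse_one_add_smul (hunit t ht)) j).trans
          (by gcongr)
    _ = (j.factorial : ℝ) * ‖S‖ ^ j * (1 + T * ρ * ‖S‖) ^ (j + 1) * ρ ^ (j + 1) := by
        simp only [C, mul_pow, pow_succ]; ring

/-- Bounds on all higher derivatives of the nonlinear flow `M(t) = (I + t S M₀)⁻¹ M₀`:
`‖M^{(j)}(t)‖ ≤ j! ‖S‖^j (1 + Tρ‖S‖)^{j+1} ρ^{j+1}` for `j ≥ 1` and `t ∈ [0,T]`. -/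
theorem stmt_17 {H : Type*} [NormedAddCommGroup H] [InnerProductSpace ℂ H] [CompleteSpace H]
    (S M₀ : H →L[ℂ] H) (hSsa : IsSelfAdjoint S) (hM₀sa : IsSelfAdjoint M₀)
    (hSpos : ∀ x : H, 0 ≤ (⟪S x, x⟫_ℂ).re) (hM₀pos : ∀ x : H, 0 ≤ (⟪M₀ x, x⟫_ℂ).re)
    (ρ T : ℝ) (hρ : ‖M₀‖ ≤ ρ) (hT : 0 < T)
    (hunit : ∀ t ∈ Set.Icc (0 : ℝ) T, IsUnit (1 + t • (S * M₀)))
    (hbound : ∀ t ∈ Set.Icc (0 : ℝ) T,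
      ‖Ring.inverse (1 + t • (S * M₀)) * M₀‖ ≤ (1 + T * ρ * ‖S‖) * ρ) :
    ∀ j : ℕ, 1 ≤ j → ∀ t ∈ Set.Icc (0 : ℝ) T,
      ‖iteratedDerivWithin j (fun t : ℝ => Ring.inverse (1 + t • (S * M₀)) * M₀)
          (Set.Icc (0 : ℝ) T) t‖ ≤
        (j.factorial : ℝ) * ‖S‖ ^ j * (1 + T * ρ * ‖S‖) ^ (j + 1) * ρ ^ (j + 1) :=
  stmt_17_general S M₀ hSsa hM₀sa ρ T hT hunit hbound
end

section
/- Let H be a finite-dimensional Hilbert space and suppose P : [0,T] → L(H) is differentiable and solves P'(t) = 𝒜P(t) + Q − P(t)SP(t) with P(0) = P₀, where 𝒜(P) = A*P + PA and ‖e^{t𝒜}M‖ ≤ C‖M‖ for all t ∈ [0,T] and M ∈ L(H). If ‖P(t)‖ ≤ γ on [0,T], then V := P' satisfies ‖V(t)‖ ≤ C(‖𝒜P₀ + Q − P₀SP₀‖) e^{2Cγ‖S‖ t} for all t ∈ [0,T]. -/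
/-!
Differentiating the Riccati equation shows that `V = P'` solves the linear equation
`V' = 𝒜V - (VSP + PSV)`. Since `s ↦ e^{(t-s)A*} V(s) e^{(t-s)A}` has derivative
`-e^{(t-s)A*} (VSP + PSV)(s) e^{(t-s)A}`, variation of constants together with the bounds on
`e^{t𝒜}` and on `P` gives `‖V t‖ ≤ C‖V 0‖ + 2Cγ‖S‖ ∫₀ᵗ ‖V s‖ ds`, and Grönwall's inequality
turns this into the exponential bound.
-/

open ContinuousLinearMap

open Set Topology MeasureTheory intervalIntegral NormedSpace

theorem hasDerivWithinAt_integral_Ici_of_continuousOn {E : Type*} [NormedAddCommGroup E]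
    [NormedSpace ℝ E] [CompleteSpace E] {u : ℝ → E} {a b x : ℝ}
    (hu : ContinuousOn u (Icc a b)) (hx : x ∈ Ico a b) :
    HasDerivWithinAt (fun y => ∫ s in a..y, u s) (u x) (Ici x) x := by
  have hIcc : Icc a b ∈ 𝓝[>] x :=
    nhdsWithin_mono x Ioi_subset_Ici_self (Icc_mem_nhdsGE_of_mem hx)
  refine integral_hasDerivWithinAt_right ?_
    ⟨Icc a b, hIcc, hu.aestronglyMeasurable measurableSet_Icc⟩
    ((hu x (Ico_subset_Icc_self hx)).mono_of_mem_nhdsWithin hIcc)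
  exact (hu.mono (Icc_subset_Icc le_rfl hx.2.le)).intervalIntegrable_of_Icc hx.1

theorem le_mul_exp_of_le_add_mul_integral {u : ℝ → ℝ} {ε K a b : ℝ} (hK : 0 ≤ K)
    (hu : ContinuousOn u (Icc a b)) (h : ∀ t ∈ Icc a b, u t ≤ ε + K * ∫ s in a..t, u s) :
    ∀ t ∈ Icc a b, u t ≤ ε * Real.exp (K * (t - a)) := by
  -- `F' = K u ≤ K F`, so the differential Grönwall inequality applies to `F`.
  set F : ℝ → ℝ := fun t => ε + K * ∫ s in a..t, u s
  have hF : ∀ x ∈ Ico a b, HasDerivWithinAt F (K * u x) (Ici x) x := fun x hx =>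
    ((hasDerivWithinAt_integral_Ici_of_continuousOn hu hx).const_mul K).const_add ε
  have hFc : ContinuousOn F (Icc a b) := by
    intro x hx
    have hab := hx.1.trans hx.2
    rw [← uIcc_of_le hab] at hu hx ⊢
    exact (continuousOn_const.add
      (continuousOn_const.mul (continuousOn_primitive_interval hu.integrableOn_uIcc))) x hx
  have hFbound : ∀ x ∈ Icc a b, F x ≤ gronwallBound ε K 0 (x - a) :=
    le_gronwallBound_of_liminf_deriv_right_le hFc
      (fun x hx _ hr => (hF x hx).liminf_right_slope_le hr) (by simp [F]) fun x hx => by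
        simpa using mul_le_mul_of_nonneg_left (h x (Ico_subset_Icc_self hx)) hK
  intro t ht
  calc u t ≤ F t := h t ht
    _ ≤ ε * Real.exp (K * (t - a)) := by simpa [gronwallBound_ε0] using hFbound t ht

section BanachAlgebra

variable {𝔸 : Type*} [NormedRing 𝔸]

/-- The right-hand side `𝒜X + Q - XSX` of the Riccati equation, with `B` in the role of `A*`. -/
def riccatiField (B A Q S X : 𝔸) : 𝔸 := B * X + X * A + Q - X * S * X

theorem norm_mul_mul_add_mul_mul_le {V S P : 𝔸} {γ : ℝ} (hP : ‖P‖ ≤ γ) :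
    ‖V * S * P + P * S * V‖ ≤ 2 * γ * ‖S‖ * ‖V‖ := by
  have hγ : 0 ≤ γ := (norm_nonneg P).trans hP
  calc ‖V * S * P + P * S * V‖ ≤ ‖V‖ * ‖S‖ * ‖P‖ + ‖P‖ * ‖S‖ * ‖V‖ :=
        (norm_add_le _ _).trans (add_le_add norm_mul₃_le norm_mul₃_le)
    _ ≤ ‖V‖ * ‖S‖ * γ + γ * ‖S‖ * ‖V‖ := by gcongr
    _ = 2 * γ * ‖S‖ * ‖V‖ := by ring

variable [NormedAlgebra ℝ 𝔸]

theorem HasDerivAt.riccatiField {P : ℝ → 𝔸} {V B A Q S : 𝔸} {t : ℝ} (hP : HasDerivAt P V t) :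
    HasDerivAt (fun s => riccatiField B A Q S (P s))
      (B * V + V * A - (V * S * P t + P t * S * V)) t := by
  have hquad : HasDerivAt (fun s => P s * S * P s) (V * S * P t + P t * S * V) t :=
    (hP.mul_const S).mul hP
  exact (((hP.const_mul B).add (hP.mul_const A)).add_const Q).sub hquad

variable [CompleteSpace 𝔸]

theorem hasDerivAt_exp_sub_smul (x : 𝔸) (t s : ℝ) :
    HasDerivAt (fun u : ℝ => exp ((t - u) • x)) (-(exp ((t - s) • x) * x)) s := by
  simpa [Function.comp_def] using
    (hasDerivAt_exp_smul_const (𝕂 := ℝ) x (t - s)).scomp s ((hasDerivAt_id s).const_sub t)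

theorem hasDerivAt_exp_sub_smul' (x : 𝔸) (t s : ℝ) :
    HasDerivAt (fun u : ℝ => exp ((t - u) • x)) (-(x * exp ((t - s) • x))) s := by
  simpa [Function.comp_def] using
    (hasDerivAt_exp_smul_const' (𝕂 := ℝ) x (t - s)).scomp s ((hasDerivAt_id s).const_sub t)

theorem sylvester_variation_of_constants {B A : 𝔸} {V W : ℝ → 𝔸} {t : ℝ} (ht : 0 ≤ t)
    (hV : ∀ s ∈ Icc 0 t, HasDerivAt V (B * V s + V s * A - W s) s)
    (hW : ContinuousOn W (Icc 0 t)) :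
    V t = exp (t • B) * V 0 * exp (t • A) -
      ∫ s in 0..t, exp ((t - s) • B) * W s * exp ((t - s) • A) := by
  set g : ℝ → 𝔸 := fun s => exp ((t - s) • B) * V s * exp ((t - s) • A)
  have hg : ∀ s ∈ uIcc 0 t,
      HasDerivAt g (-(exp ((t - s) • B) * W s * exp ((t - s) • A))) s := by
    intro s hs
    rw [uIcc_of_le ht] at hs
    refine (((hasDerivAt_exp_sub_smul B t s).mul (hV s hs)).mul
      (hasDerivAt_exp_sub_smul' A t s)).congr_deriv ?_
    simp only [Pi.mul_apply]
    noncomm_ring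
  have hE (x : 𝔸) : Continuous fun u : ℝ => exp ((t - u) • x) :=
    continuous_iff_continuousAt.2 fun s => (hasDerivAt_exp_sub_smul x t s).continuousAt
  have hint : IntervalIntegrable
      (fun s => -(exp ((t - s) • B) * W s * exp ((t - s) • A))) volume 0 t :=
    (((hE B).continuousOn.mul hW).mul (hE A).continuousOn).neg.intervalIntegrable_of_Icc ht
  have hFTC := integral_eq_sub_of_hasDerivAt hg hint
  simp only [intervalIntegral.integral_neg, g, sub_self, zero_smul, sub_zero,
    NormedSpace.exp_zero, one_mul, mul_one] at hFTC
  rw [sub_eq_add_neg]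
  exact sub_eq_iff_eq_add'.mp hFTC.symm

variable {B A Q S : 𝔸} {P : ℝ → 𝔸} {C γ T : ℝ}

theorem norm_riccatiField_le_add_integral
    (hsg : ∀ t ∈ Icc 0 T, ∀ M : 𝔸, ‖exp (t • B) * M * exp (t • A)‖ ≤ C * ‖M‖)
    (hP : ∀ t ∈ Icc 0 T, HasDerivAt P (riccatiField B A Q S (P t)) t)
    (hbound : ∀ t ∈ Icc 0 T, ‖P t‖ ≤ γ) (hC : 0 ≤ C) :
    ∀ t ∈ Icc 0 T, ‖riccatiField B A Q S (P t)‖ ≤ C * ‖riccatiField B A Q S (P 0)‖ +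
      2 * C * γ * ‖S‖ * ∫ s in 0..t, ‖riccatiField B A Q S (P s)‖ := by
  intro t ht
  set V : ℝ → 𝔸 := fun s => riccatiField B A Q S (P s)
  set W : ℝ → 𝔸 := fun s => V s * S * P s + P s * S * V s
  have hsub : Icc 0 t ⊆ Icc 0 T := Icc_subset_Icc le_rfl ht.2
  have hV : ∀ s ∈ Icc 0 T, HasDerivAt V (B * V s + V s * A - W s) s := fun s hs =>
    (hP s hs).riccatiField
  have hVc : ContinuousOn V (Icc 0 t) := fun s hs =>
    (hV s (hsub hs)).continuousAt.continuousWithinAt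
  have hPc : ContinuousOn P (Icc 0 t) := fun s hs =>
    (hP s (hsub hs)).continuousAt.continuousWithinAt
  have hWc : ContinuousOn W (Icc 0 t) :=
    ((hVc.mul continuousOn_const).mul hPc).add ((hPc.mul continuousOn_const).mul hVc)
  have hWbound : ∀ s ∈ Ioc 0 t, ‖exp ((t - s) • B) * W s * exp ((t - s) • A)‖ ≤
      2 * C * γ * ‖S‖ * ‖V s‖ := fun s hs =>
    calc _ ≤ C * ‖W s‖ := hsg (t - s) ⟨by linarith [hs.2], by linarith [hs.1, ht.2]⟩ (W s)
      _ ≤ C * (2 * γ * ‖S‖ * ‖V s‖) := by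
        gcongr
        exact norm_mul_mul_add_mul_mul_le (hbound s (hsub (Ioc_subset_Icc_self hs)))
      _ = _ := by ring
  have hint : IntervalIntegrable (fun s => 2 * C * γ * ‖S‖ * ‖V s‖) volume 0 t :=
    (continuousOn_const.mul hVc.norm).intervalIntegrable_of_Icc ht.1
  change ‖V t‖ ≤ C * ‖V 0‖ + 2 * C * γ * ‖S‖ * ∫ s in 0..t, ‖V s‖
  rw [sylvester_variation_of_constants ht.1 (fun s hs => hV s (hsub hs)) hWc,
    ← intervalIntegral.integral_const_mul]
  calc _ ≤ ‖exp (t • B) * V 0 * exp (t • A)‖ +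
        ‖∫ s in 0..t, exp ((t - s) • B) * W s * exp ((t - s) • A)‖ := norm_sub_le _ _
    _ ≤ _ := add_le_add (hsg t ht (V 0))
        (norm_integral_le_of_norm_le ht.1 (Filter.Eventually.of_forall hWbound) hint)

theorem norm_riccatiField_le_mul_exp
    (hsg : ∀ t ∈ Icc 0 T, ∀ M : 𝔸, ‖exp (t • B) * M * exp (t • A)‖ ≤ C * ‖M‖)
    (hP : ∀ t ∈ Icc 0 T, HasDerivAt P (riccatiField B A Q S (P t)) t)
    (hbound : ∀ t ∈ Icc 0 T, ‖P t‖ ≤ γ) (hC : 0 ≤ C) (hγ : 0 ≤ γ) :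
    ∀ t ∈ Icc 0 T, ‖riccatiField B A Q S (P t)‖ ≤
      C * ‖riccatiField B A Q S (P 0)‖ * Real.exp (2 * C * γ * ‖S‖ * t) := by
  have hVc : ContinuousOn (fun t => ‖riccatiField B A Q S (P t)‖) (Icc 0 T) := fun s hs =>
    (hP s hs).riccatiField.continuousAt.continuousWithinAt.norm
  simpa using le_mul_exp_of_le_add_mul_integral (by positivity) hVc
    (norm_riccatiField_le_add_integral hsg hP hbound hC)

end BanachAlgebra

theorem ContinuousLinearMap.adjoint_exp_smul {H : Type*} [NormedAddCommGroup H]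
    [InnerProductSpace ℂ H] [CompleteSpace H] (A : H →L[ℂ] H) (t : ℝ) :
    adjoint (exp (t • A)) = exp (t • adjoint A) := by
  rw [← star_eq_adjoint, star_exp, star_smul, star_trivial, star_eq_adjoint]

theorem stmt_18_general {H : Type*} [NormedAddCommGroup H] [InnerProductSpace ℂ H]
    [FiniteDimensional ℂ H] (A Q S : H →L[ℂ] H) (C γ T : ℝ) (hC : 0 < C) (hγ : 0 < γ)
    (hsg : ∀ t ∈ Set.Icc (0 : ℝ) T, ∀ M : H →L[ℂ] H,
      ‖adjoint (NormedSpace.exp (t • A)) * M * NormedSpace.exp (t • A)‖ ≤ C * ‖M‖)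
    (P : ℝ → H →L[ℂ] H) (P₀ : H →L[ℂ] H) (hP0 : P 0 = P₀)
    (hP : ∀ t ∈ Set.Icc (0 : ℝ) T,
      HasDerivAt P (adjoint A * P t + P t * A + Q - P t * S * P t) t)
    (hbound : ∀ t ∈ Set.Icc (0 : ℝ) T, ‖P t‖ ≤ γ) :
    ∀ t ∈ Set.Icc (0 : ℝ) T,
      ‖adjoint A * P t + P t * A + Q - P t * S * P t‖ ≤
        C * ‖adjoint A * P₀ + P₀ * A + Q - P₀ * S * P₀‖ *
          Real.exp (2 * C * γ * ‖S‖ * t) := by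
  have hsg' : ∀ t ∈ Icc 0 T, ∀ M : H →L[ℂ] H,
      ‖exp (t • adjoint A) * M * exp (t • A)‖ ≤ C * ‖M‖ := by
    simpa only [adjoint_exp_smul] using hsg
  subst hP0
  exact norm_riccatiField_le_mul_exp (Q := Q) (S := S) hsg' hP hbound hC.le hγ.le

/-- Bound on the derivative of a Riccati solution: if `P` solves `P' = 𝒜P + Q - PSP` with
`P(0) = P₀`, `‖P(t)‖ ≤ γ` and `‖e^{t𝒜}M‖ ≤ C‖M‖` on `[0,T]`, then `V = P'` satisfies
`‖V(t)‖ ≤ C ‖𝒜P₀ + Q - P₀SP₀‖ e^{2Cγ‖S‖t}`. -/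
theorem stmt_18 {H : Type*} [NormedAddCommGroup H] [InnerProductSpace ℂ H]
    [FiniteDimensional ℂ H] (A Q S : H →L[ℂ] H) (C γ T : ℝ) (hC : 0 < C) (hγ : 0 < γ)
    (hT : 0 < T)
    (hsg : ∀ t ∈ Set.Icc (0 : ℝ) T, ∀ M : H →L[ℂ] H,
      ‖adjoint (NormedSpace.exp (t • A)) * M * NormedSpace.exp (t • A)‖ ≤ C * ‖M‖)
    (P : ℝ → H →L[ℂ] H) (P₀ : H →L[ℂ] H) (hP0 : P 0 = P₀)
    (hP : ∀ t ∈ Set.Icc (0 : ℝ) T,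
      HasDerivAt P (adjoint A * P t + P t * A + Q - P t * S * P t) t)
    (hbound : ∀ t ∈ Set.Icc (0 : ℝ) T, ‖P t‖ ≤ γ) :
    ∀ t ∈ Set.Icc (0 : ℝ) T,
      ‖adjoint A * P t + P t * A + Q - P t * S * P t‖ ≤
        C * ‖adjoint A * P₀ + P₀ * A + Q - P₀ * S * P₀‖ *
          Real.exp (2 * C * γ * ‖S‖ * t) :=
  stmt_18_general A Q S C γ T hC hγ hsg P P₀ hP0 hP hbound
end
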